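/- For every n ≥ 0, the quadruple of statistics (asc, des, MNA, MND) is equidistributed on S_n(231,312) and S_n(213,231); i.e., there is a bijection from S_n(231,312) to S_n(213,231) preserving all four statistics. -/

import Mathlib

/-- The value of `π` at position `i` (0-based), as a natural number; `0` if out of range. -/
def pv {n : ℕ} (π : Equiv.Perm (Fin n)) (i : ℕ) : ℕ :=
  if h : i < n then (π ⟨i, h⟩ : ℕ) else 0

/-- The set of ascent positions (0-based) of `π`. -/
def ascents {n : ℕ} (π : Equiv.Perm (Fin n)) : Finset ℕ :=
  (Finset.range (n - 1)).filter fun i => pv π i < pv π (i + 1)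

/-- The set of descent positions (0-based) of `π`. -/
def descents {n : ℕ} (π : Equiv.Perm (Fin n)) : Finset ℕ :=
  (Finset.range (n - 1)).filter fun i => pv π (i + 1) < pv π i

def asc {n : ℕ} (π : Equiv.Perm (Fin n)) : ℕ := (ascents π).card

def des {n : ℕ} (π : Equiv.Perm (Fin n)) : ℕ := (descents π).card

/-- The maximum number of non-overlapping ascents of `π`. -/
noncomputable def MNA {n : ℕ} (π : Equiv.Perm (Fin n)) : ℕ :=
  sSup {k | ∃ S ⊆ ascents π, S.card = k ∧ ∀ i ∈ S, ∀ j ∈ S, i < j → i + 1 < j}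

/-- The maximum number of non-overlapping descents of `π`. -/
noncomputable def MND {n : ℕ} (π : Equiv.Perm (Fin n)) : ℕ :=
  sSup {k | ∃ S ⊆ descents π, S.card = k ∧ ∀ i ∈ S, ∀ j ∈ S, i < j → i + 1 < j}

def IsLRMax {n : ℕ} (π : Equiv.Perm (Fin n)) (i : Fin n) : Prop := ∀ j, j < i → π j < π i
def IsRLMax {n : ℕ} (π : Equiv.Perm (Fin n)) (i : Fin n) : Prop := ∀ j, i < j → π j < π i
def IsLRMin {n : ℕ} (π : Equiv.Perm (Fin n)) (i : Fin n) : Prop := ∀ j, j < i → π i < π j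
def IsRLMin {n : ℕ} (π : Equiv.Perm (Fin n)) (i : Fin n) : Prop := ∀ j, i < j → π i < π j

noncomputable def lrmax {n : ℕ} (π : Equiv.Perm (Fin n)) : ℕ := Nat.card {i : Fin n // IsLRMax π i}
noncomputable def rlmax {n : ℕ} (π : Equiv.Perm (Fin n)) : ℕ := Nat.card {i : Fin n // IsRLMax π i}
noncomputable def lrmin {n : ℕ} (π : Equiv.Perm (Fin n)) : ℕ := Nat.card {i : Fin n // IsLRMin π i}
noncomputable def rlmin {n : ℕ} (π : Equiv.Perm (Fin n)) : ℕ := Nat.card {i : Fin n // IsRLMin π i}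

def Avoids123 {n : ℕ} (π : Equiv.Perm (Fin n)) : Prop :=
  ¬ ∃ i j k : Fin n, i < j ∧ j < k ∧ π i < π j ∧ π j < π k
def Avoids132 {n : ℕ} (π : Equiv.Perm (Fin n)) : Prop :=
  ¬ ∃ i j k : Fin n, i < j ∧ j < k ∧ π i < π k ∧ π k < π j
def Avoids213 {n : ℕ} (π : Equiv.Perm (Fin n)) : Prop :=
  ¬ ∃ i j k : Fin n, i < j ∧ j < k ∧ π j < π i ∧ π i < π k
def Avoids231 {n : ℕ} (π : Equiv.Perm (Fin n)) : Prop :=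
  ¬ ∃ i j k : Fin n, i < j ∧ j < k ∧ π k < π i ∧ π i < π j
def Avoids312 {n : ℕ} (π : Equiv.Perm (Fin n)) : Prop :=
  ¬ ∃ i j k : Fin n, i < j ∧ j < k ∧ π j < π k ∧ π k < π i
def Avoids321 {n : ℕ} (π : Equiv.Perm (Fin n)) : Prop :=
  ¬ ∃ i j k : Fin n, i < j ∧ j < k ∧ π k < π j ∧ π j < π i

/-!
Each of the two classes contains exactly one permutation with any given descent set
`S ⊆ {0, …, n - 2}`, and the four statistics depend only on the descent set. The reason is
that in both classes the descent set dictates all inversions: for `i < k`, a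
{231, 312}-avoider has `π k < π i` iff `i, …, k - 1` are all descents (it is layered), and a
{213, 231}-avoider iff `i` is a descent. A permutation is determined by its inversions, and for
every `S` these two inversion patterns are realised: by reversing the maximal runs of `S`,
resp. by filling the positions with the largest remaining value at the elements of `S` and the
smallest remaining value elsewhere.
-/

open Equiv Finset

section Descents
variable {n : ℕ} (π : Perm (Fin n))

@[simp] lemma pv_val (i : Fin n) : pv π i = π i := by simp [pv]

lemma descents_subset : descents π ⊆ range (n - 1) := filter_subset _ _

lemma succ_lt_of_mem_descents {i : ℕ} (h : i ∈ descents π) : i + 1 < n := by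
  have := mem_range.1 (descents_subset π h)
  omega

lemma mem_descents_iff {i : ℕ} (h : i + 1 < n) :
    i ∈ descents π ↔ π ⟨i + 1, h⟩ < π ⟨i, by omega⟩ := by
  rw [descents, mem_filter, mem_range, Fin.lt_def]
  simp only [pv, h, Nat.lt_of_succ_lt h, dif_pos]
  omega

lemma ascents_eq_range_sdiff_descents : ascents π = range (n - 1) \ descents π := by
  ext i
  simp only [ascents, mem_sdiff, mem_filter, mem_range]
  refine ⟨fun ⟨hi, hlt⟩ => ⟨hi, fun hd => (mem_filter.1 hd).2.not_gt hlt⟩,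
    fun ⟨hi, hd⟩ => ⟨hi, ?_⟩⟩
  have hi1 : i + 1 < n := by omega
  rw [mem_descents_iff π hi1, not_lt] at hd
  have hne : π ⟨i, by omega⟩ ≠ π ⟨i + 1, hi1⟩ := π.injective.ne (by simp [Fin.ext_iff])
  simpa only [pv, hi1, Nat.lt_of_succ_lt hi1, dif_pos] using Fin.lt_def.1 (lt_of_le_of_ne hd hne)

lemma stats_eq_of_descents_eq {σ : Perm (Fin n)} (h : descents σ = descents π) :
    asc σ = asc π ∧ des σ = des π ∧ MNA σ = MNA π ∧ MND σ = MND π := by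
  have hasc : ascents σ = ascents π := by
    rw [ascents_eq_range_sdiff_descents, h, ← ascents_eq_range_sdiff_descents]
  exact ⟨by rw [asc, hasc, asc], by rw [des, h, des], by rw [MNA, hasc, MNA],
    by rw [MND, h, MND]⟩

end Descents

section Inversions
variable {n : ℕ}

def HasInversions (π : Perm (Fin n)) (R : ℕ → ℕ → Prop) : Prop :=
  ∀ i k : Fin n, i < k → (π k < π i ↔ R i k)

lemma HasInversions.eq {π σ : Perm (Fin n)} {R : ℕ → ℕ → Prop} (hπ : HasInversions π R)
    (hσ : HasInversions σ R) : π = σ := by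
  have hmono : ∀ i k, π i < π k → σ i < σ k := by
    intro i k h
    rcases lt_trichotomy i k with hik | rfl | hki
    · refine lt_of_le_of_ne (not_lt.1 fun h' => ?_) (σ.injective.ne hik.ne)
      exact h.not_gt ((hπ i k hik).2 ((hσ i k hik).1 h'))
    · exact absurd h (lt_irrefl _)
    · exact (hσ k i hki).2 ((hπ k i hki).1 h)
  have hid : StrictMono (σ ∘ π.symm) := fun a b hab => hmono _ _ (by simpa using hab)
  ext i
  have := congrFun hid.eq_id (π i)
  simp only [Function.comp_apply, symm_apply_apply, id_eq] at this
  rw [this]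

lemma exists_hasInversions (R : ℕ → ℕ → Prop) (f : ℕ → ℕ) (hlt : ∀ i < n, f i < n)
    (hR : ∀ i k, i < k → k < n → R i k → f k < f i)
    (hnR : ∀ i k, i < k → k < n → ¬R i k → f i < f k) :
    ∃ π : Perm (Fin n), HasInversions π R := by
  have hne : ∀ i k, i < k → k < n → f i ≠ f k := fun i k hik hk => by
    by_cases h : R i k
    · exact (hR i k hik hk h).ne'
    · exact (hnR i k hik hk h).ne
  have hinj : Function.Injective fun i : Fin n => (⟨f i, hlt i i.2⟩ : Fin n) := by
    intro i k h
    rcases lt_trichotomy i k with hik | rfl | hki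
    · exact absurd (congrArg Fin.val h) (hne i k hik k.2)
    · rfl
    · exact absurd (congrArg Fin.val h).symm (hne k i hki i.2)
  refine ⟨Equiv.ofBijective _ (Finite.injective_iff_bijective.1 hinj), fun i k hik => ?_⟩
  show f k < f i ↔ R i k
  by_cases h : R i k
  · exact iff_of_true (hR i k hik k.2 h) h
  · exact iff_of_false (hnR i k hik k.2 h).not_gt h

lemma HasInversions.descents_eq {π : Perm (Fin n)} {R : ℕ → ℕ → Prop} {S : Finset ℕ}
    (h : HasInversions π R) (hR : ∀ i, R i (i + 1) ↔ i ∈ S) (hS : S ⊆ range (n - 1)) :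
    descents π = S := by
  ext i
  by_cases hi : i + 1 < n
  · rw [mem_descents_iff π hi, ← hR]
    exact h ⟨i, by omega⟩ ⟨i + 1, hi⟩ (Fin.lt_def.2 (lt_add_one i))
  · refine iff_of_false (fun hd => hi (succ_lt_of_mem_descents π hd)) fun hiS => hi ?_
    have := mem_range.1 (hS hiS)
    omega

theorem bijective_descents {P : Perm (Fin n) → Prop} (R : Finset ℕ → ℕ → ℕ → Prop)
    (hR : ∀ S i, R S i (i + 1) ↔ i ∈ S)
    (hinv : ∀ π, P π → HasInversions π (R (descents π)))
    (hP : ∀ π S, HasInversions π (R S) → P π)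
    (hex : ∀ S ⊆ range (n - 1), ∃ π : Perm (Fin n), HasInversions π (R S)) :
    Function.Bijective fun π : {π // P π} =>
      (⟨descents π.1, descents_subset π.1⟩ : {S : Finset ℕ // S ⊆ range (n - 1)}) := by
  refine ⟨fun π σ h => Subtype.ext ?_, fun ⟨S, hS⟩ => ?_⟩
  · have h : descents π.1 = descents σ.1 := congrArg Subtype.val h
    exact (hinv π.1 π.2).eq (h ▸ hinv σ.1 σ.2)
  · obtain ⟨π, hπ⟩ := hex S hS
    exact ⟨⟨π, hP π S hπ⟩, Subtype.ext (hπ.descents_eq (hR S) hS)⟩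

end Inversions

section Layered
variable {n : ℕ}

def IsRun (S : Finset ℕ) (i k : ℕ) : Prop := ∀ m, i ≤ m → m < k → m ∈ S

lemma isRun_succ_iff (S : Finset ℕ) (i : ℕ) : IsRun S i (i + 1) ↔ i ∈ S :=
  ⟨fun h => h i le_rfl (lt_add_one i), fun h m h₁ h₂ => (by omega : m = i) ▸ h⟩

lemma pv_lt_pv_of_isRun_descents (π : Perm (Fin n)) {i k : ℕ} (hik : i < k) (hk : k < n)
    (h : IsRun (descents π) i k) : pv π k < pv π i := by
  induction k, hik using Nat.le_induction with
  | base => exact (mem_filter.1 (h i le_rfl (lt_add_one i))).2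
  | succ k hik ih =>
    exact (mem_filter.1 (h k (by omega) (lt_add_one k))).2.trans
      (ih (by omega) fun m h₁ h₂ => h m h₁ (by omega))

lemma hasInversions_isRun_of_avoids (π : Perm (Fin n)) (h231 : Avoids231 π)
    (h312 : Avoids312 π) : HasInversions π (IsRun (descents π)) := by
  intro i k hik
  refine ⟨fun hki m him hmk => ?_,
    fun h => by simpa using pv_lt_pv_of_isRun_descents π hik k.2 h⟩
  -- an ascent at `m` makes `i, m + 1, k` a 231 or `i, m, m + 1` a 312
  by_contra hm
  have hm1 : m + 1 < n := by omega
  set M : Fin n := ⟨m, by omega⟩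
  set M' : Fin n := ⟨m + 1, hm1⟩
  have hMM' : M < M' := Fin.lt_def.2 (lt_add_one m)
  have hasc : π M < π M' :=
    lt_of_le_of_ne (not_lt.1 ((mem_descents_iff π hm1).not.1 hm)) (π.injective.ne hMM'.ne)
  have hiM' : i < M' := Fin.lt_def.2 (by simp [M']; omega)
  rcases lt_or_gt_of_ne (π.injective.ne hiM'.ne) with hlt | hgt
  · have hM'k : M' < k := lt_of_le_of_ne (Fin.le_def.2 (by simp [M']; omega))
      fun he => (he ▸ hlt).not_gt hki
    exact h231 ⟨i, M', k, hiM', hM'k, hki, hlt⟩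
  · have hiM : i < M := lt_of_le_of_ne (Fin.le_def.2 him) fun he => (he ▸ hgt).not_gt hasc
    exact h312 ⟨i, M, M', hiM, hMM', hasc, hgt⟩

lemma IsRun.mono {S : Finset ℕ} {i k i' k' : ℕ} (h : IsRun S i k) (hi : i ≤ i')
    (hk : k' ≤ k) : IsRun S i' k' := fun m h₁ h₂ => h m (hi.trans h₁) (h₂.trans_le hk)

lemma avoids_of_hasInversions_isRun {π : Perm (Fin n)} {S : Finset ℕ}
    (h : HasInversions π (IsRun S)) : Avoids231 π ∧ Avoids312 π := by
  constructor
  · rintro ⟨i, j, k, hij, hjk, hki, hij'⟩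
    have hrun := (h i k (hij.trans hjk)).1 hki
    exact hij'.not_gt ((h i j hij).2 (hrun.mono le_rfl hjk.le))
  · rintro ⟨i, j, k, hij, hjk, hjk', hki⟩
    have hrun := (h i k (hij.trans hjk)).1 hki
    exact hjk'.not_gt ((h j k hjk).2 (hrun.mono hij.le le_rfl))

/-- `[runStart S i, runEnd S i]` is the maximal interval around `i` all of whose elements except
the last lie in `S`. -/
def runStart (S : Finset ℕ) (i : ℕ) : ℕ := ((range i).filter (· ∉ S)).sup (· + 1)

lemma exists_le_notMem (S : Finset ℕ) (i : ℕ) : ∃ m, i ≤ m ∧ m ∉ S := by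
  obtain ⟨N, hN⟩ := S.exists_nat_subset_range
  exact ⟨i + N, by omega, fun h => by simpa using hN h⟩

def runEnd (S : Finset ℕ) (i : ℕ) : ℕ := Nat.find (exists_le_notMem S i)

section Runs
variable (S : Finset ℕ) {i : ℕ}

lemma runStart_le (i : ℕ) : runStart S i ≤ i :=
  Finset.sup_le fun _ hm => mem_range.1 (mem_filter.1 hm).1

lemma lt_runStart {m : ℕ} (hmi : m < i) (hm : m ∉ S) : m < runStart S i :=
  Finset.le_sup (f := (· + 1)) (mem_filter.2 ⟨mem_range.2 hmi, hm⟩)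

lemma le_runEnd (i : ℕ) : i ≤ runEnd S i := (Nat.find_spec (exists_le_notMem S i)).1

lemma runEnd_notMem (i : ℕ) : runEnd S i ∉ S := (Nat.find_spec (exists_le_notMem S i)).2

lemma runEnd_le {m : ℕ} (him : i ≤ m) (hm : m ∉ S) : runEnd S i ≤ m :=
  Nat.find_min' _ ⟨him, hm⟩

lemma runStart_eq_of_isRun {k : ℕ} (hik : i ≤ k) (h : IsRun S i k) :
    runStart S k = runStart S i := by
  refine le_antisymm (Finset.sup_le fun m hm => ?_) (Finset.sup_le fun m hm => ?_)
  · obtain ⟨hmk, hmS⟩ := mem_filter.1 hm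
    exact lt_runStart S (not_le.1 fun him => hmS (h m him (mem_range.1 hmk))) hmS
  · obtain ⟨hmi, hmS⟩ := mem_filter.1 hm
    exact lt_runStart S ((mem_range.1 hmi).trans_le hik) hmS

lemma le_runEnd_of_isRun {k : ℕ} (h : IsRun S i k) : k ≤ runEnd S i :=
  not_lt.1 fun hlt => runEnd_notMem S i (h _ (le_runEnd S i) hlt)

lemma runEnd_eq_of_isRun {k : ℕ} (hik : i ≤ k) (h : IsRun S i k) :
    runEnd S k = runEnd S i :=
  le_antisymm (runEnd_le S (le_runEnd_of_isRun S h) (runEnd_notMem S i))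
    (runEnd_le S (hik.trans (le_runEnd S k)) (runEnd_notMem S k))

end Runs

/-- Reverses every maximal interval `[runStart S i, runEnd S i]`; the result is the layered
permutation whose descent set is `S`. -/
def reverseRuns (S : Finset ℕ) (i : ℕ) : ℕ := runStart S i + runEnd S i - i

lemma exists_hasInversions_isRun {S : Finset ℕ} (hS : S ⊆ range (n - 1)) :
    ∃ π : Perm (Fin n), HasInversions π (IsRun S) := by
  refine exists_hasInversions _ (reverseRuns S) (fun i hi => ?_) (fun i k hik _ h => ?_)
    (fun i k hik _ h => ?_)
  · have hend : runEnd S i ≤ n - 1 := runEnd_le S (by omega) fun h => by simpa using hS h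
    have := runStart_le S i
    unfold reverseRuns
    omega
  · have := runStart_le S i
    have := le_runEnd_of_isRun S h
    unfold reverseRuns
    rw [runStart_eq_of_isRun S hik.le h, runEnd_eq_of_isRun S hik.le h]
    omega
  · obtain ⟨m, him, hmk, hm⟩ : ∃ m, i ≤ m ∧ m < k ∧ m ∉ S := by
      simpa [IsRun] using h
    have := runEnd_le S him hm
    have := lt_runStart S hmk hm
    have := runStart_le S i
    have := le_runEnd S i
    have := le_runEnd S k
    unfold reverseRuns
    omega

end Layered

section Extremal
variable {n : ℕ}

lemma hasInversions_mem_of_avoids (π : Perm (Fin n)) (h213 : Avoids213 π)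
    (h231 : Avoids231 π) : HasInversions π (fun i _ => i ∈ descents π) := by
  intro i k hik
  have hi1 : (i : ℕ) + 1 < n := by omega
  set I : Fin n := ⟨i + 1, hi1⟩
  have hiI : i < I := Fin.lt_def.2 (lt_add_one _)
  have hIk : I ≤ k := Fin.le_def.2 hik
  show π k < π i ↔ (i : ℕ) ∈ descents π
  rw [mem_descents_iff π hi1, Fin.eta]
  constructor
  · intro hki
    by_contra hd
    have hasc : π i < π I := lt_of_le_of_ne (not_lt.1 hd) (π.injective.ne hiI.ne)
    exact h231 ⟨i, I, k, hiI, lt_of_le_of_ne hIk fun he => (he ▸ hasc).not_gt hki, hki, hasc⟩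
  · intro (hd : π I < π i)
    by_contra hki
    have hik' : π i < π k := lt_of_le_of_ne (not_lt.1 hki) (π.injective.ne hik.ne)
    exact h213 ⟨i, I, k, hiI, lt_of_le_of_ne hIk fun he => (he ▸ hd).not_gt hik', hd, hik'⟩

lemma avoids_of_hasInversions_mem {π : Perm (Fin n)} {S : Finset ℕ}
    (h : HasInversions π (fun i _ => i ∈ S)) : Avoids213 π ∧ Avoids231 π := by
  constructor
  · rintro ⟨i, j, k, hij, hjk, hji, hik⟩
    exact hik.not_gt ((h i k (hij.trans hjk)).2 ((h i j hij).1 hji))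
  · rintro ⟨i, j, k, hij, hjk, hki, hij'⟩
    exact hij'.not_gt ((h i j hij).2 ((h i k (hij.trans hjk)).1 hki))

lemma card_filter_range_lt {p : ℕ → Prop} [DecidablePred p] {i k : ℕ} (hp : p i)
    (hik : i < k) :
    #((range i).filter p) < #((range k).filter p) :=
  card_lt_card ⟨filter_subset_filter _ (range_subset_range.2 hik.le),
    fun h => by simpa using h (mem_filter.2 ⟨mem_range.2 hik, hp⟩)⟩

/-- Position `i` takes the largest value not used before it when `i ∈ S`, and the smallest
one otherwise. -/
def extremalValue (S : Finset ℕ) (n i : ℕ) : ℕ :=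
  if i ∈ S then n - 1 - #((range i).filter (· ∈ S)) else #((range i).filter (· ∉ S))

lemma exists_hasInversions_mem (S : Finset ℕ) :
    ∃ π : Perm (Fin n), HasInversions π (fun i _ => i ∈ S) := by
  have hsplit (j : ℕ) : #((range j).filter (· ∈ S)) + #((range j).filter (· ∉ S)) = j := by
    rw [card_filter_add_card_filter_not, card_range]
  refine exists_hasInversions _ (extremalValue S n) (fun i hi => ?_) (fun i k hik hk hi => ?_)
    (fun i k hik hk hi => ?_)
  · have := hsplit i
    unfold extremalValue
    split_ifs <;> omega
  · have := card_filter_range_lt (p := (· ∈ S)) hi hik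
    have := hsplit i
    have := hsplit k
    unfold extremalValue
    split_ifs <;> omega
  · have := card_filter_range_lt (p := (· ∉ S)) hi hik
    have := hsplit i
    have := hsplit k
    unfold extremalValue
    split_ifs <;> omega

end Extremal

theorem equidistribution_231_312_vs_213_231 (n : ℕ) :
    ∃ e : {π : Equiv.Perm (Fin n) // Avoids231 π ∧ Avoids312 π} ≃
          {σ : Equiv.Perm (Fin n) // Avoids213 σ ∧ Avoids231 σ},
      ∀ π, asc (e π).1 = asc π.1 ∧ des (e π).1 = des π.1 ∧
        MNA (e π).1 = MNA π.1 ∧ MND (e π).1 = MND π.1 := by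
  have hA := bijective_descents (P := fun π : Perm (Fin n) => Avoids231 π ∧ Avoids312 π)
    IsRun isRun_succ_iff (fun π h => hasInversions_isRun_of_avoids π h.1 h.2)
    (fun _ _ h => avoids_of_hasInversions_isRun h) (fun _ hS => exists_hasInversions_isRun hS)
  have hB := bijective_descents (P := fun σ : Perm (Fin n) => Avoids213 σ ∧ Avoids231 σ)
    (fun S i _ => i ∈ S) (fun _ _ => Iff.rfl) (fun σ h => hasInversions_mem_of_avoids σ h.1 h.2)
    (fun _ _ h => avoids_of_hasInversions_mem h) (fun S _ => exists_hasInversions_mem S)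
  refine ⟨(Equiv.ofBijective _ hA).trans (Equiv.ofBijective _ hB).symm,
    fun π => stats_eq_of_descents_eq π.1 ?_⟩
  exact congrArg Subtype.val (Equiv.ofBijective_apply_symm_apply _ hB _)
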